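/- (Block space as an $\ell^{r'}$-sum of slice spaces.) Let $1 < q < \infty$ and $1 < p < t < r < \infty$. Then $\vec{f} \in \mathcal{H}_{p'}^{t',r'}(\ell^{q'})$ if and only if $[\vec{f}] := \inf \big\{ (\sum_{j \in \mathbb{Z}} \|\vec{f}_j\|_{(\mathcal{E}_{p'}^{t',r'})_j(\ell^{q'})}^{r'})^{1/r'} : \vec{f} = \sum_{j \in \mathbb{Z}} \vec{f}_j \text{ a.e.}, \ \vec{f}_j \in (\mathcal{E}_{p'}^{t',r'})_j(\ell^{q'}) \big\} < \infty$; moreover $\|\vec{f}\|_{\mathcal{H}_{p'}^{t',r'}(\ell^{q'})} = [\vec{f}]$. -/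

import Mathlib

/-! A `(p',t',ℓ^{q'})`-block lives on one dyadic cube `Q_{j,k}`, and the slice norm of
generation `j` is the `ℓ^{r'}` sum over `k` of the normalised local norms
`|Q_{j,k}|^{1/t'-1/p'} ‖χ_{Q_{j,k}} g‖_{L^{p'}(ℓ^{q'})}`. Since `1/t' - 1/p' = -(1/t - 1/p)`,
a function supported on `Q_{j,k}` is a block exactly when this local norm is at most `1`.
Hence grouping the blocks of each generation gives slice functions whose slice norms are
bounded by the `ℓ^{r'}` norms of the coefficients of that generation, and conversely cutting
a slice function into its normalised pieces on the cubes of its generation gives blocks whose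
coefficients are the local norms. Both constructions preserve the `ℓ^{r'}` norm, so the two
infima coincide. -/

open MeasureTheory Filter ENNReal

noncomputable section

def dyadicCube (n : ℕ) (j : ℤ) (m : Fin n → ℤ) : Set (Fin n → ℝ) :=
  {x | ∀ i, (2:ℝ) ^ (-(j:ℝ)) * m i ≤ x i ∧ x i < (2:ℝ) ^ (-(j:ℝ)) * (m i + 1)}

def cubeVol (n : ℕ) (j : ℤ) : ℝ≥0∞ := (2:ℝ≥0∞) ^ (-((j:ℝ) * n))

def conj (a : ℝ) : ℝ := a / (a - 1)

def conjE (r : ℝ≥0∞) : ℝ := if r = ∞ then 1 else conj r.toReal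

/-- The `ℓ^{q'}` norm of a real sequence, as an extended nonnegative real. -/
def seqENorm (q' : ℝ) (v : ℕ → ℝ) : ℝ≥0∞ := (∑' i, ENNReal.ofReal |v i| ^ q') ^ (1/q')

/-- A `(p',t',ℓ^{q'})`-block supported on the dyadic cube `Q_{j,k}`. -/
def IsSeqBlock (n : ℕ) (p t q : ℝ) (j : ℤ) (k : Fin n → ℤ)
    (b : (Fin n → ℝ) → ℕ → ℝ) : Prop :=
  (∀ i, Measurable fun x => b x i) ∧ (∀ x, x ∉ dyadicCube n j k → b x = 0) ∧
    (∫⁻ x, seqENorm (conj q) (b x) ^ conj p) ^ (1 / conj p) ≤ cubeVol n j ^ (1/t - 1/p)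

/-- A representation of the `ℓ^{q'}`-valued function `f` as a sum of blocks. -/
def IsSeqBlockRep (n : ℕ) (p t q : ℝ) (f : (Fin n → ℝ) → ℕ → ℝ)
    (lam : ℤ × (Fin n → ℤ) → ℝ) (b : ℤ × (Fin n → ℤ) → (Fin n → ℝ) → ℕ → ℝ) : Prop :=
  (∀ jk : ℤ × (Fin n → ℤ), IsSeqBlock n p t q jk.1 jk.2 (b jk)) ∧
    ∀ᵐ x : Fin n → ℝ ∂volume, ∀ i, HasSum (fun jk => lam jk * b jk x i) (f x i)

/-- The norm of the `ℓ^{q'}`-valued block space `𝓗_{p'}^{t',r'}(ℓ^{q'})`. -/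
def seqBlockNorm (n : ℕ) (p t q r' : ℝ) (f : (Fin n → ℝ) → ℕ → ℝ) : ℝ≥0∞ :=
  ⨅ (lam : ℤ × (Fin n → ℤ) → ℝ) (b : ℤ × (Fin n → ℤ) → (Fin n → ℝ) → ℕ → ℝ)
    (_ : IsSeqBlockRep n p t q f lam b),
    (∑' jk : ℤ × (Fin n → ℤ), ENNReal.ofReal |lam jk| ^ r') ^ (1/r')

/-- The norm of the slice space `(𝓔_{p'}^{t',r'})_j(ℓ^{q'})` at generation `j`. -/
def sliceNorm (n : ℕ) (p t q r' : ℝ) (j : ℤ) (f : (Fin n → ℝ) → ℕ → ℝ) : ℝ≥0∞ :=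
  (∑' k : Fin n → ℤ, (cubeVol n j ^ (1/conj t - 1/conj p) *
    (∫⁻ x in dyadicCube n j k, seqENorm (conj q) (f x) ^ conj p) ^ (1/conj p)) ^ r') ^ (1/r')

/-- Membership in the slice space. -/
def MemSlice (n : ℕ) (p t q r' : ℝ) (j : ℤ) (f : (Fin n → ℝ) → ℕ → ℝ) : Prop :=
  (∀ i, Measurable fun x => f x i) ∧ sliceNorm n p t q r' j f < ∞

/-- An `ℝ≥0∞`-valued `(p',t',ℓ^{q'})`-block supported on `Q_{j,k}`. -/
def IsSeqBlockE (n : ℕ) (p t q : ℝ) (j : ℤ) (k : Fin n → ℤ)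
    (b : (Fin n → ℝ) → ℕ → ℝ≥0∞) : Prop :=
  (∀ i, Measurable fun x => b x i) ∧ (∀ x, x ∉ dyadicCube n j k → b x = 0) ∧
    (∫⁻ x, (∑' i, b x i ^ conj q) ^ (conj p / conj q)) ^ (1 / conj p) ≤
      cubeVol n j ^ (1/t - 1/p)

/-- The block norm for nonnegative (extended-real valued) `ℓ^{q'}`-valued functions. -/
def seqBlockNormE (n : ℕ) (p t q r' : ℝ) (F : (Fin n → ℝ) → ℕ → ℝ≥0∞) : ℝ≥0∞ :=
  ⨅ (lam : ℤ × (Fin n → ℤ) → ℝ≥0∞) (b : ℤ × (Fin n → ℤ) → (Fin n → ℝ) → ℕ → ℝ≥0∞)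
    (_ : (∀ jk : ℤ × (Fin n → ℤ), IsSeqBlockE n p t q jk.1 jk.2 (b jk)) ∧
      ∀ᵐ x : Fin n → ℝ ∂volume, ∀ i, F x i = ∑' jk : ℤ × (Fin n → ℤ), lam jk * b jk x i),
    (∑' jk : ℤ × (Fin n → ℤ), lam jk ^ r') ^ (1/r')

/-- The Euclidean ball in `ℝⁿ`. -/
def eBall (n : ℕ) (c : Fin n → ℝ) (R : ℝ) : Set (Fin n → ℝ) :=
  {y | ∑ i, (y i - c i) ^ 2 < R ^ 2}

/-- The powered Hardy–Littlewood maximal operator `𝓜_η` (over Euclidean balls). -/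
def maximalPow (n : ℕ) (η : ℝ) (g : (Fin n → ℝ) → ℝ) (x : Fin n → ℝ) : ℝ≥0∞ :=
  (⨆ (c : Fin n → ℝ) (R : ℝ) (_ : 0 < R) (_ : x ∈ eBall n c R),
    (volume (eBall n c R))⁻¹ * ∫⁻ y in eBall n c R, ENNReal.ofReal |g y| ^ η) ^ (1/η)


lemma conj_pos {a : ℝ} (ha : 1 < a) : 0 < conj a :=
  div_pos (by linarith) (by linarith)

lemma one_div_conj {a : ℝ} (ha : a ≠ 0) : 1 / conj a = 1 - 1 / a := by
  rw [conj, one_div_div, sub_div, div_self ha]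

lemma cubeVol_ne_zero (n : ℕ) (j : ℤ) : cubeVol n j ≠ 0 := by
  simp [cubeVol]

lemma cubeVol_ne_top (n : ℕ) (j : ℤ) : cubeVol n j ≠ ∞ := by
  simp [cubeVol]

lemma cubeVol_rpow_conj_mul_rpow {p t : ℝ} (hp : p ≠ 0) (ht : t ≠ 0) (n : ℕ) (j : ℤ) :
    cubeVol n j ^ (1/conj t - 1/conj p) * cubeVol n j ^ (1/t - 1/p) = 1 := by
  rw [← ENNReal.rpow_add _ _ (cubeVol_ne_zero n j) (cubeVol_ne_top n j), one_div_conj hp,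
    one_div_conj ht, show 1 - 1/t - (1 - 1/p) + (1/t - 1/p) = 0 by ring, ENNReal.rpow_zero]

section DyadicIndex

variable {n : ℕ}

def dyadicIndex (j : ℤ) (x : Fin n → ℝ) : Fin n → ℤ := fun i => ⌊x i * 2 ^ (j:ℝ)⌋

lemma mem_dyadicCube_iff {j : ℤ} {k : Fin n → ℤ} {x : Fin n → ℝ} :
    x ∈ dyadicCube n j k ↔ dyadicIndex j x = k := by
  have hc : (0:ℝ) < 2 ^ (j:ℝ) := by positivity
  simp only [dyadicCube, Set.mem_ofPred_eq, dyadicIndex, funext_iff, Int.floor_eq_iff,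
    Real.rpow_neg zero_le_two, inv_mul_le_iff₀ hc, lt_inv_mul_iff₀ hc, mul_comm (x _)]

lemma mem_dyadicCube_dyadicIndex (j : ℤ) (x : Fin n → ℝ) :
    x ∈ dyadicCube n j (dyadicIndex j x) :=
  mem_dyadicCube_iff.mpr rfl

lemma measurable_dyadicIndex (j : ℤ) : Measurable (dyadicIndex (n := n) j) :=
  measurable_pi_lambda _ fun i => ((measurable_pi_apply i).mul_const _).floor

lemma measurableSet_dyadicCube (j : ℤ) (k : Fin n → ℤ) : MeasurableSet (dyadicCube n j k) := by
  have : dyadicCube n j k = dyadicIndex j ⁻¹' {k} := by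
    ext x; simp [mem_dyadicCube_iff]
  rw [this]
  exact measurable_dyadicIndex j (measurableSet_singleton k)

lemma Measurable.comp_dyadicIndex {β : Type*} [MeasurableSpace β]
    {h : (Fin n → ℤ) → (Fin n → ℝ) → β} (hh : ∀ k, Measurable (h k)) (j : ℤ) :
    Measurable fun x => h (dyadicIndex j x) x :=
  (measurable_from_prod_countable_left (f := fun y : (Fin n → ℝ) × (Fin n → ℤ) => h y.2 y.1)
    hh).comp (measurable_id.prodMk (measurable_dyadicIndex j))

lemma hasSum_iff_hasSum_dyadicIndex {α : Type*} [AddCommMonoid α] [TopologicalSpace α]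
    {x : Fin n → ℝ} {g : ℤ × (Fin n → ℤ) → α}
    (hg : ∀ j k, x ∉ dyadicCube n j k → g (j, k) = 0) {a : α} :
    HasSum g a ↔ HasSum (fun j => g (j, dyadicIndex j x)) a := by
  refine (Function.Injective.hasSum_iff (g := fun j => (j, dyadicIndex j x))
    (fun _ _ h => congrArg Prod.fst h) ?_).symm
  rintro ⟨j, k⟩ hjk
  refine hg j k fun hx => hjk ⟨j, ?_⟩
  simp [mem_dyadicCube_iff.mp hx]

end DyadicIndex

lemma seqENorm_const_mul {Q : ℝ} (hQ : 0 < Q) (c : ℝ) (v : ℕ → ℝ) :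
    seqENorm Q (fun i => c * v i) = ENNReal.ofReal |c| * seqENorm Q v := by
  simp only [seqENorm, abs_mul, ENNReal.ofReal_mul (abs_nonneg c),
    ENNReal.mul_rpow_of_nonneg _ _ hQ.le, ENNReal.tsum_mul_left]
  rw [ENNReal.mul_rpow_of_nonneg _ _ (by positivity), one_div, ENNReal.rpow_rpow_inv hQ.ne']

lemma seqENorm_eq_zero_iff {Q : ℝ} (hQ : 0 < Q) {v : ℕ → ℝ} :
    seqENorm Q v = 0 ↔ v = 0 := by
  rw [seqENorm, ENNReal.rpow_eq_zero_iff_of_pos (one_div_pos.mpr hQ), ENNReal.tsum_eq_zero]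
  simp [ENNReal.rpow_eq_zero_iff_of_pos hQ, funext_iff]

lemma measurable_seqENorm {α : Type*} [MeasurableSpace α] {g : α → ℕ → ℝ}
    (hg : ∀ i, Measurable fun x => g x i) (Q : ℝ) :
    Measurable fun x => seqENorm Q (g x) :=
  (Measurable.tsum fun i => (hg i).abs.ennreal_ofReal.pow_const Q).pow_const _

section CubeNorm

variable {n : ℕ} {p t q : ℝ} {j : ℤ} {k : Fin n → ℤ}

def cubeNorm (n : ℕ) (p t q : ℝ) (j : ℤ) (k : Fin n → ℤ) (g : (Fin n → ℝ) → ℕ → ℝ) : ℝ≥0∞ :=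
  cubeVol n j ^ (1/conj t - 1/conj p) *
    (∫⁻ x in dyadicCube n j k, seqENorm (conj q) (g x) ^ conj p) ^ (1/conj p)

lemma sliceNorm_rpow {r' : ℝ} (hr' : r' ≠ 0) (g : (Fin n → ℝ) → ℕ → ℝ) :
    sliceNorm n p t q r' j g ^ r' = ∑' k, cubeNorm n p t q j k g ^ r' := by
  rw [sliceNorm, ← ENNReal.rpow_mul, one_div_mul_cancel hr', ENNReal.rpow_one]
  rfl

lemma cubeNorm_le_sliceNorm {r' : ℝ} (hr' : 0 < r') (g : (Fin n → ℝ) → ℕ → ℝ) (k : Fin n → ℤ) :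
    cubeNorm n p t q j k g ≤ sliceNorm n p t q r' j g := by
  rw [← ENNReal.rpow_le_rpow_iff hr', sliceNorm_rpow hr'.ne']
  exact ENNReal.le_tsum k

lemma cubeNorm_congr {g g' : (Fin n → ℝ) → ℕ → ℝ} (h : ∀ x ∈ dyadicCube n j k, g x = g' x) :
    cubeNorm n p t q j k g = cubeNorm n p t q j k g' := by
  rw [cubeNorm, cubeNorm, setLIntegral_congr_fun (measurableSet_dyadicCube j k)
    fun x hx => by rw [h x hx]]

lemma cubeNorm_const_mul (hp : 1 < p) (hq : 1 < q) (c : ℝ) (g : (Fin n → ℝ) → ℕ → ℝ) :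
    cubeNorm n p t q j k (fun x i => c * g x i) = ENNReal.ofReal |c| * cubeNorm n p t q j k g := by
  have hP := conj_pos hp
  simp only [cubeNorm, seqENorm_const_mul (conj_pos hq), ENNReal.mul_rpow_of_nonneg _ _ hP.le]
  rw [lintegral_const_mul' _ _ (by finiteness), ENNReal.mul_rpow_of_nonneg _ _ (by positivity),
    ← ENNReal.rpow_mul, mul_one_div_cancel hP.ne', ENNReal.rpow_one]
  ring

lemma isSeqBlock_iff (hp : 1 < p) (ht : 1 < t) (hq : 1 < q) (b : (Fin n → ℝ) → ℕ → ℝ) :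
    IsSeqBlock n p t q j k b ↔ (∀ i, Measurable fun x => b x i) ∧
      (∀ x, x ∉ dyadicCube n j k → b x = 0) ∧ cubeNorm n p t q j k b ≤ 1 := by
  refine and_congr_right fun _ => and_congr_right fun hsupp => ?_
  have hlocal : ∫⁻ x in dyadicCube n j k, seqENorm (conj q) (b x) ^ conj p =
      ∫⁻ x, seqENorm (conj q) (b x) ^ conj p := by
    refine setLIntegral_eq_of_support_subset fun x hx => ?_
    by_contra hxQ
    apply hx
    show seqENorm (conj q) (b x) ^ conj p = 0
    rw [hsupp x hxQ, (seqENorm_eq_zero_iff (conj_pos hq)).mpr rfl,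
      ENNReal.zero_rpow_of_pos (conj_pos hp)]
  have hvol : cubeVol n j ^ (1/t - 1/p) = (cubeVol n j ^ (1/conj t - 1/conj p))⁻¹ :=
    (ENNReal.eq_inv_of_mul_eq_one_left (by
      rw [mul_comm]; exact cubeVol_rpow_conj_mul_rpow (by linarith) (by linarith) n j))
  rw [cubeNorm, hlocal, hvol, ENNReal.le_inv_iff_mul_le, mul_comm]

lemma ae_eq_zero_of_cubeNorm_eq_zero (hp : 1 < p) (hq : 1 < q) {g : (Fin n → ℝ) → ℕ → ℝ}
    (hg : ∀ i, Measurable fun x => g x i) (h : cubeNorm n p t q j k g = 0) :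
    ∀ᵐ x, x ∈ dyadicCube n j k → g x = 0 := by
  have hP := conj_pos hp
  rw [cubeNorm, mul_eq_zero, ENNReal.rpow_eq_zero_iff_of_pos (one_div_pos.mpr hP),
    lintegral_eq_zero_iff ((measurable_seqENorm hg _).pow_const _)] at h
  rcases h with h | h
  · exact absurd h (ENNReal.rpow_pos (pos_iff_ne_zero.mpr (cubeVol_ne_zero n j))
      (cubeVol_ne_top n j)).ne'
  · refine (ae_restrict_iff' (measurableSet_dyadicCube j k)).mp ?_
    filter_upwards [h] with x hx
    rwa [Pi.zero_apply, ENNReal.rpow_eq_zero_iff_of_pos hP, seqENorm_eq_zero_iff (conj_pos hq)]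
      at hx

end CubeNorm

section Decomposition

variable {n : ℕ} {p t q r' : ℝ} {f : (Fin n → ℝ) → ℕ → ℝ}

def sliceSumNorm (n : ℕ) (p t q r' : ℝ) (f : (Fin n → ℝ) → ℕ → ℝ) : ℝ≥0∞ :=
  ⨅ (F : ℤ → (Fin n → ℝ) → ℕ → ℝ)
    (_ : ∀ j : ℤ, MemSlice n p t q r' j (F j))
    (_ : ∀ᵐ x : Fin n → ℝ ∂volume, ∀ i, HasSum (fun j : ℤ => F j x i) (f x i)),
    (∑' j : ℤ, sliceNorm n p t q r' j (F j) ^ r') ^ (1 / r')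

/-- The slice functions are the blocks of one generation grouped together. -/
lemma sliceSumNorm_le_of_isSeqBlockRep (hp : 1 < p) (ht : 1 < t) (hq : 1 < q) (hr' : 0 < r')
    {lam : ℤ × (Fin n → ℤ) → ℝ} {b : ℤ × (Fin n → ℤ) → (Fin n → ℝ) → ℕ → ℝ}
    (hrep : IsSeqBlockRep n p t q f lam b) :
    sliceSumNorm n p t q r' f ≤ (∑' jk, ENNReal.ofReal |lam jk| ^ r') ^ (1 / r') := by
  obtain ⟨hblock, hsum⟩ := hrep
  simp only [isSeqBlock_iff hp ht hq] at hblock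
  set F : ℤ → (Fin n → ℝ) → ℕ → ℝ :=
    fun j x i => lam (j, dyadicIndex j x) * b (j, dyadicIndex j x) x i
  have hslice : ∀ j, sliceNorm n p t q r' j (F j) ^ r' ≤
      ∑' k, ENNReal.ofReal |lam (j, k)| ^ r' := by
    intro j
    rw [sliceNorm_rpow hr'.ne']
    refine ENNReal.tsum_le_tsum fun k => ENNReal.rpow_le_rpow ?_ hr'.le
    calc cubeNorm n p t q j k (F j)
        = cubeNorm n p t q j k (fun x i => lam (j, k) * b (j, k) x i) :=
          cubeNorm_congr fun x hx => by simp only [F, mem_dyadicCube_iff.mp hx]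
      _ = ENNReal.ofReal |lam (j, k)| * cubeNorm n p t q j k (b (j, k)) :=
          cubeNorm_const_mul hp hq _ _
      _ ≤ ENNReal.ofReal |lam (j, k)| := mul_le_of_le_one_right' (hblock (j, k)).2.2
  rcases eq_or_ne (∑' jk, ENNReal.ofReal |lam jk| ^ r') ∞ with htop | hfin
  · rw [htop, ENNReal.top_rpow_of_pos (one_div_pos.mpr hr')]
    exact le_top
  have hmem : ∀ j, MemSlice n p t q r' j (F j) := by
    refine fun j => ⟨fun i => Measurable.comp_dyadicIndex
      (h := fun k x => lam (j, k) * b (j, k) x i) (fun k => ((hblock (j, k)).1 i).const_mul _) j,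
      ?_⟩
    refine (ENNReal.rpow_lt_top_iff_of_pos hr').mp ((hslice j).trans_lt ?_)
    rw [ENNReal.tsum_prod (f := fun j k => ENNReal.ofReal |lam (j, k)| ^ r')] at hfin
    exact (ENNReal.le_tsum j).trans_lt hfin.lt_top
  have hsumF : ∀ᵐ x ∂volume, ∀ i, HasSum (fun j => F j x i) (f x i) := by
    filter_upwards [hsum] with x hx i
    refine (hasSum_iff_hasSum_dyadicIndex fun j k hxQ => ?_).mp (hx i)
    simp only [(hblock (j, k)).2.1 x hxQ, Pi.zero_apply, mul_zero]
  refine (iInf₂_le F hmem).trans ((iInf_le _ hsumF).trans ?_)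
  gcongr
  rw [ENNReal.tsum_prod (f := fun j k => ENNReal.ofReal |lam (j, k)| ^ r')]
  exact ENNReal.tsum_le_tsum hslice

lemma sliceSumNorm_le_seqBlockNorm (hp : 1 < p) (ht : 1 < t) (hq : 1 < q) (hr' : 0 < r') :
    sliceSumNorm n p t q r' f ≤ seqBlockNorm n p t q r' f :=
  le_iInf₂ fun _ _ => le_iInf (sliceSumNorm_le_of_isSeqBlockRep hp ht hq hr')

lemma cubeNorm_ne_top_of_memSlice (hr' : 0 < r') {j : ℤ} {g : (Fin n → ℝ) → ℕ → ℝ}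
    (h : MemSlice n p t q r' j g) (k : Fin n → ℤ) : cubeNorm n p t q j k g ≠ ∞ :=
  ((cubeNorm_le_sliceNorm hr' g k).trans_lt h.2).ne

/-- The blocks are the pieces of the slice functions on the cubes of their generation, each
divided by its local norm. -/
lemma seqBlockNorm_le_of_memSlice (hp : 1 < p) (ht : 1 < t) (hq : 1 < q) (hr' : 0 < r')
    {F : ℤ → (Fin n → ℝ) → ℕ → ℝ} (hmem : ∀ j, MemSlice n p t q r' j (F j))
    (hsum : ∀ᵐ x ∂volume, ∀ i, HasSum (fun j => F j x i) (f x i)) :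
    seqBlockNorm n p t q r' f ≤ (∑' j, sliceNorm n p t q r' j (F j) ^ r') ^ (1 / r') := by
  set L : ℤ × (Fin n → ℤ) → ℝ≥0∞ := fun jk => cubeNorm n p t q jk.1 jk.2 (F jk.1)
  have hL : ∀ jk, L jk ≠ ∞ := fun jk => cubeNorm_ne_top_of_memSlice hr' (hmem jk.1) jk.2
  -- `(L jk).toReal⁻¹ = 0` when `L jk = 0`, so the block is then `0`.
  set b : ℤ × (Fin n → ℤ) → (Fin n → ℝ) → ℕ → ℝ := fun jk x i =>
    (L jk).toReal⁻¹ * (dyadicCube n jk.1 jk.2).indicator (fun y => F jk.1 y i) x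
  have hblock : ∀ jk, IsSeqBlock n p t q jk.1 jk.2 (b jk) := by
    intro jk
    rw [isSeqBlock_iff hp ht hq]
    refine ⟨fun i => (((hmem jk.1).1 i).indicator (measurableSet_dyadicCube _ _)).const_mul _,
      fun x hx => funext fun i => by simp [b, hx], ?_⟩
    calc cubeNorm n p t q jk.1 jk.2 (b jk)
        = ENNReal.ofReal |(L jk).toReal⁻¹| * L jk :=
          (cubeNorm_const_mul hp hq _ _).trans (congrArg _ (cubeNorm_congr fun x hx =>
            funext fun i => Set.indicator_of_mem hx _))
      _ ≤ (L jk)⁻¹ * L jk := by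
          rw [abs_of_nonneg (by positivity), ← ENNReal.toReal_inv]
          gcongr
          exact ENNReal.ofReal_toReal_le
      _ ≤ 1 := ENNReal.inv_mul_le_one _
  have hzero : ∀ᵐ x ∂volume, ∀ jk, L jk = 0 → x ∈ dyadicCube n jk.1 jk.2 → F jk.1 x = 0 := by
    refine ae_all_iff.mpr fun jk => ?_
    by_cases h : L jk = 0
    · filter_upwards [ae_eq_zero_of_cubeNorm_eq_zero hp hq (hmem jk.1).1 h] with x hx _ using hx
    · exact Eventually.of_forall fun x h' => absurd h' h
  have hrep : IsSeqBlockRep n p t q f (fun jk => (L jk).toReal) b := by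
    refine ⟨hblock, ?_⟩
    filter_upwards [hsum, hzero] with x hx hx0 i
    refine (hasSum_iff_hasSum_dyadicIndex (x := x) fun j k hxQ => by simp [b, hxQ]).mpr ?_
    convert hx i using 2 with j
    have hxQ := mem_dyadicCube_dyadicIndex j x
    rcases eq_or_ne (L (j, dyadicIndex j x)) 0 with h0 | h0
    · simp [h0, hx0 _ h0 hxQ]
    · simp only [b, Set.indicator_of_mem hxQ]
      rw [mul_inv_cancel_left₀ (ENNReal.toReal_ne_zero.mpr ⟨h0, hL _⟩)]
  refine (iInf₂_le _ b).trans ((iInf_le _ hrep).trans (le_of_eq ?_))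
  congr 1
  rw [ENNReal.tsum_prod (f := fun j k => ENNReal.ofReal |(L (j, k)).toReal| ^ r')]
  refine tsum_congr fun j => ?_
  rw [sliceNorm_rpow hr'.ne']
  refine tsum_congr fun k => ?_
  rw [abs_of_nonneg ENNReal.toReal_nonneg, ENNReal.ofReal_toReal (hL _)]

lemma seqBlockNorm_le_sliceSumNorm (hp : 1 < p) (ht : 1 < t) (hq : 1 < q) (hr' : 0 < r') :
    seqBlockNorm n p t q r' f ≤ sliceSumNorm n p t q r' f :=
  le_iInf₂ fun _ hmem => le_iInf (seqBlockNorm_le_of_memSlice hp ht hq hr' hmem)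

end Decomposition

theorem block_space_via_slice_spaces_general (n : ℕ) (p t q r : ℝ)
    (hq : 1 < q) (hp : 1 < p) (hpt : p < t) (htr : t < r)
    (f : (Fin n → ℝ) → ℕ → ℝ) :
    (seqBlockNorm n p t q (conj r) f < ∞ ↔
      (⨅ (F : ℤ → (Fin n → ℝ) → ℕ → ℝ)
        (_ : ∀ j : ℤ, MemSlice n p t q (conj r) j (F j))
        (_ : ∀ᵐ x : Fin n → ℝ ∂volume, ∀ i,
          HasSum (fun j : ℤ => F j x i) (f x i)),
        (∑' j : ℤ, sliceNorm n p t q (conj r) j (F j) ^ conj r) ^ (1 / conj r)) < ∞) ∧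
    seqBlockNorm n p t q (conj r) f =
      ⨅ (F : ℤ → (Fin n → ℝ) → ℕ → ℝ)
        (_ : ∀ j : ℤ, MemSlice n p t q (conj r) j (F j))
        (_ : ∀ᵐ x : Fin n → ℝ ∂volume, ∀ i,
          HasSum (fun j : ℤ => F j x i) (f x i)),
        (∑' j : ℤ, sliceNorm n p t q (conj r) j (F j) ^ conj r) ^ (1 / conj r) := by
  have ht : 1 < t := hp.trans hpt
  have hr' : 0 < conj r := conj_pos (ht.trans htr)
  have h : seqBlockNorm n p t q (conj r) f = sliceSumNorm n p t q (conj r) f :=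
    le_antisymm (seqBlockNorm_le_sliceSumNorm hp ht hq hr')
      (sliceSumNorm_le_seqBlockNorm hp ht hq hr')
  exact ⟨by rw [h]; rfl, h⟩

theorem block_space_via_slice_spaces (n : ℕ) (p t q r : ℝ)
    (hq : 1 < q) (hp : 1 < p) (hpt : p < t) (htr : t < r)
    (f : (Fin n → ℝ) → ℕ → ℝ) (hf : ∀ i, Measurable fun x => f x i) :
    (seqBlockNorm n p t q (conj r) f < ∞ ↔
      (⨅ (F : ℤ → (Fin n → ℝ) → ℕ → ℝ)
        (_ : ∀ j : ℤ, MemSlice n p t q (conj r) j (F j))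
        (_ : ∀ᵐ x : Fin n → ℝ ∂volume, ∀ i,
          HasSum (fun j : ℤ => F j x i) (f x i)),
        (∑' j : ℤ, sliceNorm n p t q (conj r) j (F j) ^ conj r) ^ (1 / conj r)) < ∞) ∧
    seqBlockNorm n p t q (conj r) f =
      ⨅ (F : ℤ → (Fin n → ℝ) → ℕ → ℝ)
        (_ : ∀ j : ℤ, MemSlice n p t q (conj r) j (F j))
        (_ : ∀ᵐ x : Fin n → ℝ ∂volume, ∀ i,
          HasSum (fun j : ℤ => F j x i) (f x i)),
        (∑' j : ℤ, sliceNorm n p t q (conj r) j (F j) ^ conj r) ^ (1 / conj r) :=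
  block_space_via_slice_spaces_general n p t q r hq hp hpt htr f

end
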